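/- arXiv:2407.13176 — 2 statements merged into one kernel-verified Lean document; each statement's English description precedes it below -/
import Mathlib

section
/- For every rotation matrix R in SO(3) with tr(R) ≠ −1, there exists a unique vector u ∈ ℝ³ with ‖u‖ < π such that the matrix exponential of u^∧ equals R. (This makes the logarithm map well defined on the subset SO°(3) of rotations with rotation angle strictly less than π.) -/
/-!
For `θ = ‖u‖` one has `(u^∧)³ = -θ² u^∧`, so the exponential series collapses to Rodrigues'
formula `exp u^∧ = 1 + (sin θ / θ) u^∧ + ((1 - cos θ) / θ²) (u^∧)²`. Hence
`tr (exp u^∧) = 1 + 2 cos θ` and `exp u^∧ - (exp u^∧)ᵀ = (2 sin θ / θ) u^∧`; for `θ < π` the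
trace determines `θ`, and then the skew part determines `u`.

Conversely, `Rᵀ = adj R` for `R ∈ SO(3)`, and Cayley–Hamilton turns this into
`(R - Rᵀ)² = (1 + tr R) (R + Rᵀ - 2)`. Write `R - Rᵀ = 2 w^∧`. If `w = 0` this identity forces
`R = 1`. Otherwise take `θ ∈ (0, π)` with `cos θ = (tr R - 1) / 2`; taking traces gives
`‖w‖ = sin θ`, and `u = (θ / ‖w‖) w` satisfies `exp u^∧ = 1 + w^∧ + (w^∧)² / (1 + cos θ) = R`.
-/

open Matrix

noncomputable section

/-- The `hat` map sending `u ∈ ℝ³` to the skew-symmetric matrix `u^∧` with `u^∧ v = u × v`. -/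
def hat (u : EuclideanSpace ℝ (Fin 3)) : Matrix (Fin 3) (Fin 3) ℝ :=
  !![0, -u 2, u 1; u 2, 0, -u 0; -u 1, u 0, 0]

/-- `R ∈ SO(3)`: real 3×3 matrices with `RᵀR = I` and `det R = 1`. -/
def SO3 (R : Matrix (Fin 3) (Fin 3) ℝ) : Prop := Rᵀ * R = 1 ∧ R.det = 1

open NormedSpace
open scoped Nat

theorem Real.hasSum_sin_div {θ : ℝ} (hθ : θ ≠ 0) :
    HasSum (fun k : ℕ => ((2 * k + 1)! : ℝ)⁻¹ * (-θ ^ 2) ^ k) (Real.sin θ / θ) := by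
  refine ((Real.hasSum_sin θ).div_const θ).congr_fun fun k => ?_
  rw [neg_pow, ← pow_mul]
  field_simp
  ring

theorem Real.hasSum_one_sub_cos_div_sq {θ : ℝ} (hθ : θ ≠ 0) :
    HasSum (fun k : ℕ => ((2 * k + 2)! : ℝ)⁻¹ * (-θ ^ 2) ^ k) ((1 - Real.cos θ) / θ ^ 2) := by
  have h := ((hasSum_nat_add_iff' 1).mpr (Real.hasSum_cos θ)).div_const (-θ ^ 2)
  rw [show (1 - Real.cos θ) / θ ^ 2 = (Real.cos θ - 1) / -θ ^ 2 by field_simp; ring]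
  simp only [Finset.sum_range_one, pow_zero, mul_zero, Nat.factorial_zero, Nat.cast_one,
    div_one, mul_one] at h
  refine h.congr_fun fun k => ?_
  rw [neg_pow, ← pow_mul, show 2 * (k + 1) = 2 * k + 2 by ring]
  field_simp
  ring

section Rodrigues

variable {𝔸 : Type*} [Ring 𝔸] [Algebra ℝ 𝔸]

theorem pow_two_mul_add_one_of_pow_three_eq {A : 𝔸} {c : ℝ} (h : A ^ 3 = c • A) (k : ℕ) :
    A ^ (2 * k + 1) = c ^ k • A := by
  induction k with
  | zero => simp
  | succ k ih =>
    rw [show 2 * (k + 1) + 1 = 2 * k + 1 + 2 by ring, pow_add, ih, smul_mul_assoc, ← pow_succ',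
      h, smul_smul, pow_succ]

theorem pow_two_mul_add_two_of_pow_three_eq {A : 𝔸} {c : ℝ} (h : A ^ 3 = c • A) (k : ℕ) :
    A ^ (2 * k + 2) = c ^ k • A ^ 2 := by
  rw [pow_succ, pow_two_mul_add_one_of_pow_three_eq h, smul_mul_assoc, sq]

variable [TopologicalSpace 𝔸] [IsTopologicalRing 𝔸] [T2Space 𝔸] [ContinuousSMul ℝ 𝔸]

theorem exp_eq_of_pow_three_eq {A : 𝔸} {θ : ℝ} (hθ : θ ≠ 0) (h : A ^ 3 = -θ ^ 2 • A) :
    exp A = 1 + (Real.sin θ / θ) • A + ((1 - Real.cos θ) / θ ^ 2) • A ^ 2 := by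
  rw [exp_eq_tsum ℝ]
  refine HasSum.tsum_eq ?_
  have hodd : HasSum (fun k : ℕ => ((2 * k + 1)! : ℝ)⁻¹ • A ^ (2 * k + 1))
      ((Real.sin θ / θ) • A) := by
    simpa [pow_two_mul_add_one_of_pow_three_eq h, smul_smul] using
      (Real.hasSum_sin_div hθ).smul_const A
  have heven : HasSum (fun k : ℕ => ((2 * k)! : ℝ)⁻¹ • A ^ (2 * k))
      (1 + ((1 - Real.cos θ) / θ ^ 2) • A ^ 2) := by
    rw [← hasSum_nat_add_iff' 1]
    simpa [pow_two_mul_add_two_of_pow_three_eq h, smul_smul, mul_add] using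
      (Real.hasSum_one_sub_cos_div_sq hθ).smul_const (A ^ 2)
  rw [add_right_comm]
  exact HasSum.even_add_odd (f := fun n : ℕ => (n ! : ℝ)⁻¹ • A ^ n) heven hodd

end Rodrigues

def vee (A : Matrix (Fin 3) (Fin 3) ℝ) : EuclideanSpace ℝ (Fin 3) := !₂[A 2 1, A 0 2, A 1 0]

theorem EuclideanSpace.norm_sq_fin_three (u : EuclideanSpace ℝ (Fin 3)) :
    ‖u‖ ^ 2 = u 0 ^ 2 + u 1 ^ 2 + u 2 ^ 2 := by
  simp [EuclideanSpace.norm_sq_eq, Fin.sum_univ_three]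

theorem vee_hat (u : EuclideanSpace ℝ (Fin 3)) : vee (hat u) = u := by
  ext i; fin_cases i <;> simp [vee, hat]

theorem hat_injective : Function.Injective hat :=
  Function.LeftInverse.injective vee_hat

theorem hat_vee {A : Matrix (Fin 3) (Fin 3) ℝ} (hA : Aᵀ = -A) : hat (vee A) = A := by
  have h : ∀ i j, A j i = -A i j := fun i j => by simpa using congrFun (congrFun hA i) j
  ext i j
  fin_cases i <;> fin_cases j <;> simp [hat, vee] <;>
    linarith [h 0 0, h 1 1, h 2 2, h 0 1, h 0 2, h 1 2]

theorem hat_zero : hat 0 = 0 := by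
  ext i j; fin_cases i <;> fin_cases j <;> simp [hat]

theorem hat_smul (r : ℝ) (u : EuclideanSpace ℝ (Fin 3)) : hat (r • u) = r • hat u := by
  ext i j; fin_cases i <;> fin_cases j <;> simp [hat]

theorem hat_transpose (u : EuclideanSpace ℝ (Fin 3)) : (hat u)ᵀ = -hat u := by
  ext i j; fin_cases i <;> fin_cases j <;> simp [hat]

theorem hat_pow_three (u : EuclideanSpace ℝ (Fin 3)) : hat u ^ 3 = -‖u‖ ^ 2 • hat u := by
  rw [EuclideanSpace.norm_sq_fin_three]
  ext i j
  fin_cases i <;> fin_cases j <;> simp [hat, pow_succ, mul_apply, Fin.sum_univ_three] <;> ring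

theorem trace_hat (u : EuclideanSpace ℝ (Fin 3)) : (hat u).trace = 0 := by
  simp [trace_fin_three, hat]

theorem trace_hat_sq (u : EuclideanSpace ℝ (Fin 3)) : (hat u ^ 2).trace = -2 * ‖u‖ ^ 2 := by
  rw [EuclideanSpace.norm_sq_fin_three]
  simp [trace_fin_three, hat, sq]
  ring

theorem exp_hat {u : EuclideanSpace ℝ (Fin 3)} (hu : u ≠ 0) :
    exp (hat u) = 1 + (Real.sin ‖u‖ / ‖u‖) • hat u
      + ((1 - Real.cos ‖u‖) / ‖u‖ ^ 2) • hat u ^ 2 :=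
  exp_eq_of_pow_three_eq (norm_ne_zero_iff.mpr hu) (hat_pow_three u)

theorem trace_exp_hat (u : EuclideanSpace ℝ (Fin 3)) :
    (exp (hat u)).trace = 1 + 2 * Real.cos ‖u‖ := by
  rcases eq_or_ne u 0 with rfl | hu
  · norm_num [hat_zero, trace_one]
  · have hθ : ‖u‖ ≠ 0 := norm_ne_zero_iff.mpr hu
    simp only [exp_hat hu, trace_add, trace_smul, trace_one, trace_hat, trace_hat_sq,
      Fintype.card_fin, smul_eq_mul]
    field_simp
    ring

theorem exp_hat_sub_transpose (u : EuclideanSpace ℝ (Fin 3)) :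
    exp (hat u) - (exp (hat u))ᵀ = (2 * Real.sin ‖u‖ / ‖u‖) • hat u := by
  rcases eq_or_ne u 0 with rfl | hu
  · simp [hat_zero]
  · simp only [exp_hat hu, transpose_add, transpose_smul, transpose_one, transpose_pow,
      hat_transpose, even_two, Even.neg_pow]
    module

theorem eq_of_exp_hat_eq {u v : EuclideanSpace ℝ (Fin 3)} (hu : ‖u‖ < Real.pi)
    (hv : ‖v‖ < Real.pi) (h : exp (hat u) = exp (hat v)) : u = v := by
  have hnorm : ‖u‖ = ‖v‖ := by
    refine Real.injOn_cos ⟨norm_nonneg u, hu.le⟩ ⟨norm_nonneg v, hv.le⟩ ?_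
    linarith [trace_exp_hat u, trace_exp_hat v, congrArg trace h]
  rcases eq_or_ne u 0 with rfl | hu0
  · exact (norm_eq_zero.mp (hnorm ▸ norm_zero)).symm
  · have hsin : 2 * Real.sin ‖u‖ / ‖u‖ ≠ 0 :=
      (div_pos (mul_pos two_pos (Real.sin_pos_of_pos_of_lt_pi (norm_pos_iff.mpr hu0) hu))
        (norm_pos_iff.mpr hu0)).ne'
    have h' := exp_hat_sub_transpose u
    rw [h, exp_hat_sub_transpose v, ← hnorm] at h'
    exact hat_injective (smul_right_injective _ hsin h'.symm)

theorem exp_hat_smul_inv_norm {w : EuclideanSpace ℝ (Fin 3)} {θ : ℝ} (hθ : 0 ≤ θ) (hw : w ≠ 0)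
    (hsin : ‖w‖ = Real.sin θ) :
    exp (hat ((θ * ‖w‖⁻¹) • w)) = 1 + hat w + (1 + Real.cos θ)⁻¹ • hat w ^ 2 := by
  have hnorm : ‖(θ * ‖w‖⁻¹) • w‖ = θ := norm_smul_inv_norm' (𝕜 := ℝ) hθ hw
  have hs : Real.sin θ ≠ 0 := hsin ▸ norm_ne_zero_iff.mpr hw
  have hθ0 : θ ≠ 0 := by rintro rfl; exact hs Real.sin_zero
  have hc : 1 + Real.cos θ ≠ 0 := by
    intro hc; apply hs; nlinarith [Real.sin_sq_add_cos_sq θ]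
  have hu : (θ * ‖w‖⁻¹) • w ≠ 0 := by rw [← norm_ne_zero_iff, hnorm]; exact hθ0
  rw [exp_hat hu, hnorm, hat_smul, smul_pow, hsin]
  match_scalars
  · rfl
  · field_simp
  · field_simp
    linear_combination -Real.sin_sq_add_cos_sq θ

theorem adjugate_fin_three_eq {α : Type*} [CommRing α] (A : Matrix (Fin 3) (Fin 3) α) :
    adjugate A = A ^ 2 - A.trace • A + (adjugate A).trace • 1 := by
  ext i j
  fin_cases i <;> fin_cases j <;>
    simp [adjugate_fin_three, trace_fin_three, sq, mul_apply, Fin.sum_univ_three, one_apply] <;>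
    ring

theorem hat_vee_skew (A : Matrix (Fin 3) (Fin 3) ℝ) :
    hat (vee ((2⁻¹ : ℝ) • (A - Aᵀ))) = (2⁻¹ : ℝ) • (A - Aᵀ) :=
  hat_vee (by rw [transpose_smul, transpose_sub, transpose_transpose, ← smul_neg, neg_sub])

namespace SO3

variable {R : Matrix (Fin 3) (Fin 3) ℝ}

theorem transpose_eq_adjugate (hR : SO3 R) : Rᵀ = adjugate R := by
  refine left_inv_eq_right_inv hR.1 ?_
  rw [mul_adjugate, hR.2, one_smul]

theorem sq_eq (hR : SO3 R) : R ^ 2 = Rᵀ + R.trace • R - R.trace • 1 := by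
  have htr : (adjugate R).trace = R.trace := by rw [← hR.transpose_eq_adjugate, trace_transpose]
  rw [hR.transpose_eq_adjugate, adjugate_fin_three_eq, htr]
  abel

theorem sub_transpose_sq (hR : SO3 R) :
    (R - Rᵀ) ^ 2 = (1 + R.trace) • (R + Rᵀ) - (2 + 2 * R.trace) • 1 := by
  have hsqT : Rᵀ ^ 2 = R + R.trace • Rᵀ - R.trace • 1 := by
    rw [← transpose_pow, hR.sq_eq]
    simp [transpose_add, transpose_sub]
  have hRRT : R * Rᵀ = 1 := mul_eq_one_comm.mp hR.1
  calc (R - Rᵀ) ^ 2 = R ^ 2 + Rᵀ ^ 2 - R * Rᵀ - Rᵀ * R := by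
        rw [sq, sq, sq, sub_mul, mul_sub, mul_sub]; abel
    _ = _ := by rw [hR.sq_eq, hsqT, hRRT, hR.1]; module

theorem norm_vee_sq (hR : SO3 R) :
    ‖vee ((2⁻¹ : ℝ) • (R - Rᵀ))‖ ^ 2 = (1 + R.trace) * (3 - R.trace) / 4 := by
  have h := trace_hat_sq (vee ((2⁻¹ : ℝ) • (R - Rᵀ)))
  rw [hat_vee_skew, smul_pow, hR.sub_transpose_sq] at h
  simp only [trace_add, trace_sub, trace_smul, trace_transpose, trace_one, Fintype.card_fin,
    smul_eq_mul] at h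
  linear_combination h / 2

theorem eq_one_of_transpose_eq (hR : SO3 R) (htr : R.trace ≠ -1) (h : Rᵀ = R) : R = 1 := by
  have hsq := hR.sub_transpose_sq
  rw [h, sub_self, sq, zero_mul] at hsq
  have h2 : (2 + 2 * R.trace) • (R - 1) = 0 := by
    rw [hsq]
    module
  rcases smul_eq_zero.mp h2 with h0 | h0
  · exact absurd (by linarith) htr
  · exact sub_eq_zero.mp h0

theorem exists_exp_hat_eq (hR : SO3 R) (htr : R.trace ≠ -1) :
    ∃ u : EuclideanSpace ℝ (Fin 3), ‖u‖ < Real.pi ∧ exp (hat u) = R := by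
  set w := vee ((2⁻¹ : ℝ) • (R - Rᵀ))
  have hw : hat w = (2⁻¹ : ℝ) • (R - Rᵀ) := hat_vee_skew R
  rcases eq_or_ne w 0 with hw0 | hw0
  · refine ⟨0, by simpa using Real.pi_pos, ?_⟩
    rw [hat_zero, exp_zero, eq_comm]
    refine hR.eq_one_of_transpose_eq htr ?_
    rw [hw0, hat_zero, eq_comm, smul_eq_zero] at hw
    exact (sub_eq_zero.mp (hw.resolve_left (by norm_num))).symm
  have hnorm : ‖w‖ ^ 2 = (1 + R.trace) * (3 - R.trace) / 4 := hR.norm_vee_sq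
  have ht : -1 < R.trace ∧ R.trace < 3 := by
    have : 0 < ‖w‖ ^ 2 := by positivity
    constructor <;> nlinarith
  set θ := Real.arccos ((R.trace - 1) / 2)
  have hθ : 0 ≤ θ := Real.arccos_nonneg _
  have hcos : Real.cos θ = (R.trace - 1) / 2 := Real.cos_arccos (by linarith) (by linarith)
  have hsin : ‖w‖ = Real.sin θ := by
    rw [Real.sin_arccos, ← Real.sqrt_sq (norm_nonneg w), hnorm]
    ring_nf
  refine ⟨(θ * ‖w‖⁻¹) • w, ?_, ?_⟩
  · exact (norm_smul_inv_norm' (𝕜 := ℝ) hθ hw0).trans_lt (Real.arccos_lt_pi.mpr (by linarith))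
  · have ht0 : 1 + R.trace ≠ 0 := by linarith
    rw [exp_hat_smul_inv_norm hθ hw0 hsin, hw, hcos, smul_pow, hR.sub_transpose_sq,
      show 1 + (R.trace - 1) / 2 = (1 + R.trace) / 2 by ring]
    match_scalars <;> field_simp <;> ring

end SO3

/-- For every rotation matrix `R ∈ SO(3)` with `tr R ≠ -1`, there exists a unique `u ∈ ℝ³`
with `‖u‖ < π` such that `exp (u^∧) = R`. -/
theorem so3_log_exists_unique (R : Matrix (Fin 3) (Fin 3) ℝ) (hR : SO3 R)
    (htr : R.trace ≠ -1) :
    ∃! u : EuclideanSpace ℝ (Fin 3), ‖u‖ < Real.pi ∧ NormedSpace.exp (hat u) = R := by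
  obtain ⟨u, hu, hexp⟩ := hR.exists_exp_hat_eq htr
  exact ⟨u, ⟨hu, hexp⟩, fun v hv => eq_of_exp_hat_eq hv.1 hu (hv.2.trans hexp.symm)⟩
end
end

section
/- Let P₁ and P₂ be real n×n symmetric positive definite matrices, μ ∈ ℝⁿ, and α ∈ (0,1). Define X = (α P₁⁻¹ + (1−α) P₂⁻¹)⁻¹, û = X (1−α) P₂⁻¹ μ, d² = μᵀ ((1/α) P₁ + (1/(1−α)) P₂)⁻¹ μ, and k = 1 − d². Then for every u ∈ ℝⁿ lying in the intersection of the two ellipsoids E(0, P₁) = {u : uᵀ P₁⁻¹ u ≤ 1} and E(μ, P₂) = {u : (u−μ)ᵀ P₂⁻¹ (u−μ) ≤ 1}, one has (u − û)ᵀ X⁻¹ (u − û) ≤ k; that is, the intersection is contained in the convex combination ellipsoid E(û, k X). In particular, if the intersection is nonempty then k ≥ 0. -/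
/-!
Write `A = P₁⁻¹`, `B = P₂⁻¹` and `Y = X⁻¹ = α A + (1-α) B`. Completing the square gives, for every
`u`, the identity
`α uᵀAu + (1-α) (u-μ)ᵀB(u-μ) = (u-û)ᵀY(u-û) + d²`,
where the constant is identified with `d²` through
`(α⁻¹P₁ + (1-α)⁻¹P₂)⁻¹ = (1-α)B X αA = (1-α)B - (1-α)² B X B`.
On the intersection of the two ellipsoids the left side is at most `α + (1-α) = 1`, hence
`(u-û)ᵀY(u-û) ≤ 1 - d² = k`; and `k ≥ 0` because `Y` is positive definite.
-/

open Matrix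

namespace Matrix

variable {ι R K : Type*} [Fintype ι]

theorem IsSymm.dotProduct_mulVec_comm [CommSemiring R] {A : Matrix ι ι R} (hA : A.IsSymm)
    (v w : ι → R) : v ⬝ᵥ A *ᵥ w = w ⬝ᵥ A *ᵥ v := by
  rw [← dotProduct_transpose_mulVec, hA.eq]

theorem IsSymm.dotProduct_mulVec_sub [CommRing R] {A : Matrix ι ι R} (hA : A.IsSymm)
    (v w : ι → R) :
    (v - w) ⬝ᵥ A *ᵥ (v - w) = v ⬝ᵥ A *ᵥ v - 2 * (v ⬝ᵥ A *ᵥ w) + w ⬝ᵥ A *ᵥ w := by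
  rw [mulVec_sub, dotProduct_sub, sub_dotProduct, sub_dotProduct, hA.dotProduct_mulVec_comm w v]
  ring

variable [DecidableEq ι]

theorem IsSymm.dotProduct_mulVec_sub_mulVec [CommRing R] {Y X : Matrix ι ι R} (hY : Y.IsSymm)
    (hYX : Y * X = 1) (u b : ι → R) :
    (u - X *ᵥ b) ⬝ᵥ Y *ᵥ (u - X *ᵥ b) = u ⬝ᵥ Y *ᵥ u - 2 * (u ⬝ᵥ b) + b ⬝ᵥ X *ᵥ b := by
  have hYXb : Y *ᵥ (X *ᵥ b) = b := by rw [mulVec_mulVec, hYX, one_mulVec]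
  rw [hY.dotProduct_mulVec_sub, hYXb, dotProduct_comm (X *ᵥ b)]

theorem inv_add_eq_inv_mul_inv_inv_add_inv_mul_inv [CommRing R] {P Q : Matrix ι ι R}
    (hP : IsUnit P.det) (hQ : IsUnit Q.det) : (P + Q)⁻¹ = Q⁻¹ * (P⁻¹ + Q⁻¹)⁻¹ * P⁻¹ := by
  have hPQ : P + Q = P * (P⁻¹ + Q⁻¹) * Q := by
    simpa [nonsing_inv_nonsing_inv _ hP, nonsing_inv_nonsing_inv _ hQ] using
      inv_add_inv (A := P⁻¹) (B := Q⁻¹) (by simp [isUnit_iff_isUnit_det, hP, hQ])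
  rw [hPQ, mul_inv_rev, mul_inv_rev, Matrix.mul_assoc]

theorem inv_smul_of_ne_zero [Field K] {P : Matrix ι ι K} (hP : IsUnit P.det) {c : K}
    (hc : c ≠ 0) : (c • P)⁻¹ = c⁻¹ • P⁻¹ :=
  inv_smul' P (Units.mk0 c hc) hP

theorem inv_inv_smul_add_inv_smul [Field K] {P Q X : Matrix ι ι K} (hP : IsUnit P.det)
    (hQ : IsUnit Q.det) {α β : K} (hα : α ≠ 0) (hβ : β ≠ 0)
    (hXY : X * (α • P⁻¹ + β • Q⁻¹) = 1) :
    (α⁻¹ • P + β⁻¹ • Q)⁻¹ = β • Q⁻¹ - β • Q⁻¹ * X * (β • Q⁻¹) := by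
  have hdet {c : K} (hc : c ≠ 0) {M : Matrix ι ι K} (hM : IsUnit M.det) :
      IsUnit (c • M).det := by
    rw [det_smul]
    exact (hc.isUnit.pow _).mul hM
  rw [inv_add_eq_inv_mul_inv_inv_add_inv_mul_inv (hdet (inv_ne_zero hα) hP)
      (hdet (inv_ne_zero hβ) hQ), inv_smul_of_ne_zero hP (inv_ne_zero hα),
    inv_smul_of_ne_zero hQ (inv_ne_zero hβ), inv_inv, inv_inv, inv_eq_left_inv hXY,
    eq_sub_iff_add_eq, Matrix.mul_assoc, Matrix.mul_assoc, ← Matrix.mul_add, ← Matrix.mul_add, hXY,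
    Matrix.mul_one]

end Matrix

section

variable {ι R K : Type*} [Fintype ι] [DecidableEq ι]

theorem weighted_sum_quadratic_forms_eq [CommRing R] {A B X : Matrix ι ι R} (hA : A.IsSymm)
    (hB : B.IsSymm) {α β : R} (hYX : (α • A + β • B) * X = 1) (μ u : ι → R) :
    α * (u ⬝ᵥ A *ᵥ u) + β * ((u - μ) ⬝ᵥ B *ᵥ (u - μ)) =
      (u - X *ᵥ (β • (B *ᵥ μ))) ⬝ᵥ (α • A + β • B) *ᵥ (u - X *ᵥ (β • (B *ᵥ μ))) +
        (β * (μ ⬝ᵥ B *ᵥ μ) - (β • (B *ᵥ μ)) ⬝ᵥ X *ᵥ (β • (B *ᵥ μ))) := by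
  rw [((hA.smul α).add (hB.smul β)).dotProduct_mulVec_sub_mulVec hYX,
    hB.dotProduct_mulVec_sub]
  simp only [add_mulVec, smul_mulVec, dotProduct_add, dotProduct_smul, smul_eq_mul]
  ring

theorem cce_quadratic_identity [Field K] {P Q X : Matrix ι ι K} (hP : IsUnit P.det)
    (hQ : IsUnit Q.det) (hPs : P.IsSymm) (hQs : Q.IsSymm) {α β : K} (hα : α ≠ 0) (hβ : β ≠ 0)
    (hXY : X * (α • P⁻¹ + β • Q⁻¹) = 1) (μ u : ι → K) :
    α * (u ⬝ᵥ P⁻¹ *ᵥ u) + β * ((u - μ) ⬝ᵥ Q⁻¹ *ᵥ (u - μ)) =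
      (u - X *ᵥ (β • (Q⁻¹ *ᵥ μ))) ⬝ᵥ (α • P⁻¹ + β • Q⁻¹) *ᵥ (u - X *ᵥ (β • (Q⁻¹ *ᵥ μ))) +
        μ ⬝ᵥ (α⁻¹ • P + β⁻¹ • Q)⁻¹ *ᵥ μ := by
  rw [weighted_sum_quadratic_forms_eq hPs.inv hQs.inv (mul_eq_one_comm.mp hXY),
    inv_inv_smul_add_inv_smul hP hQ hα hβ hXY]
  congr 1
  rw [sub_mulVec, dotProduct_sub, ← mulVec_mulVec, ← mulVec_mulVec,
    (hQs.inv.smul β).dotProduct_mulVec_comm μ (X *ᵥ _), dotProduct_comm (X *ᵥ _)]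
  simp only [smul_mulVec, dotProduct_smul, smul_eq_mul]

end

/-- CCE fusion: with `X = (α P₁⁻¹ + (1−α) P₂⁻¹)⁻¹`, `uhat = X ((1−α) P₂⁻¹ μ)`,
`d² = μᵀ ((1/α) P₁ + (1/(1−α)) P₂)⁻¹ μ` and `k = 1 − d²`, every `u` in the intersection of the
ellipsoids `E(0, P₁)` and `E(μ, P₂)` satisfies `(u−uhat)ᵀ X⁻¹ (u−uhat) ≤ k`, i.e. the intersection
is contained in `E(uhat, k X)`; in particular if the intersection is nonempty then `k ≥ 0`. -/
theorem cce_contains_intersection {n : ℕ} (P₁ P₂ : Matrix (Fin n) (Fin n) ℝ)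
    (h₁ : P₁.PosDef) (h₂ : P₂.PosDef) (μ : Fin n → ℝ) (α : ℝ) (hα0 : 0 < α) (hα1 : α < 1)
    (X : Matrix (Fin n) (Fin n) ℝ) (hX : X = (α • P₁⁻¹ + (1 - α) • P₂⁻¹)⁻¹)
    (uhat : Fin n → ℝ) (huhat : uhat = X *ᵥ ((1 - α) • (P₂⁻¹ *ᵥ μ)))
    (d2 : ℝ) (hd2 : d2 = μ ⬝ᵥ ((α⁻¹ • P₁ + (1 - α)⁻¹ • P₂)⁻¹ *ᵥ μ))
    (k : ℝ) (hk : k = 1 - d2) :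
    (∀ u : Fin n → ℝ, u ⬝ᵥ (P₁⁻¹ *ᵥ u) ≤ 1 → (u - μ) ⬝ᵥ (P₂⁻¹ *ᵥ (u - μ)) ≤ 1 →
      (u - uhat) ⬝ᵥ (X⁻¹ *ᵥ (u - uhat)) ≤ k) ∧
    ((∃ u : Fin n → ℝ, u ⬝ᵥ (P₁⁻¹ *ᵥ u) ≤ 1 ∧ (u - μ) ⬝ᵥ (P₂⁻¹ *ᵥ (u - μ)) ≤ 1) → 0 ≤ k) := by
  have hβ : 0 < 1 - α := sub_pos.mpr hα1
  have hY : (α • P₁⁻¹ + (1 - α) • P₂⁻¹).PosDef := (h₁.inv.smul hα0).add (h₂.inv.smul hβ)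
  have hXY : X * (α • P₁⁻¹ + (1 - α) • P₂⁻¹) = 1 := hX ▸ nonsing_inv_mul _ hY.det_pos.ne'.isUnit
  have hXinv : X⁻¹ = α • P₁⁻¹ + (1 - α) • P₂⁻¹ := inv_eq_right_inv hXY
  have hsymm {P : Matrix (Fin n) (Fin n) ℝ} (hP : P.PosDef) : P.IsSymm :=
    isHermitian_iff_isSymm.mp hP.isHermitian
  have hcontained : ∀ u : Fin n → ℝ, u ⬝ᵥ (P₁⁻¹ *ᵥ u) ≤ 1 →
      (u - μ) ⬝ᵥ (P₂⁻¹ *ᵥ (u - μ)) ≤ 1 → (u - uhat) ⬝ᵥ (X⁻¹ *ᵥ (u - uhat)) ≤ k := by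
    intro u hu₁ hu₂
    have key := cce_quadratic_identity h₁.det_pos.ne'.isUnit h₂.det_pos.ne'.isUnit (hsymm h₁)
      (hsymm h₂) hα0.ne' hβ.ne' hXY μ u
    rw [← huhat, ← hd2, ← hXinv] at key
    rw [hk]
    linarith [mul_le_mul_of_nonneg_left hu₁ hα0.le, mul_le_mul_of_nonneg_left hu₂ hβ.le]
  refine ⟨hcontained, fun ⟨u, hu₁, hu₂⟩ => ?_⟩
  have hnonneg : 0 ≤ (u - uhat) ⬝ᵥ (X⁻¹ *ᵥ (u - uhat)) := by
    simpa [hXinv] using hY.posSemidef.dotProduct_mulVec_nonneg (u - uhat)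
  exact hnonneg.trans (hcontained u hu₁ hu₂)
end
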